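/- Let G_k=(V,E,k) be a strongly connected labeled simple digraph with |V| ≥ 2. Then the matrix M = −A_k diag(K_k) ∈ ℝ^{V×V} has positive diagonal entries, nonpositive off-diagonal entries, and all of its row sums and column sums are zero; in particular, M is both row and column diagonally dominant. -/

import Mathlib

/-!
Every column of `A_k` sums to zero, and `A_k K_k = 0` is the Markov chain tree theorem: both
`∑_{j→i} k_{j→i} (K_k)_j` and `(∑_{i→j} k_{i→j}) (K_k)_i` are the total weight of the subgraphs
of `E` in which every vertex has exactly one out-edge and whose unique cycle passes through `i`.
Such a graph is a tree rooted at `i` plus an out-edge of `i`, and also a tree rooted at `j` plus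
the edge `j → i` that precedes `i` on the cycle; deleting that edge recovers the tree.
Strong connectivity gives a spanning tree towards every vertex, so `K_k > 0`, and together with
`|V| ≥ 2` it gives every vertex an out-edge; this fixes the signs of `M`, and diagonal dominance
follows from the signs and the vanishing row and column sums.
-/

open Matrix BigOperators Finset

variable {V : Type*}

/-- Directed reachability in the digraph with edge set `F`. -/
def dReach (F : Finset (V × V)) : V → V → Prop :=
  Relation.ReflTransGen fun a b => (a, b) ∈ F

/-- Reachability in the underlying undirected graph of the digraph with edge set `F`. -/
def uReach (F : Finset (V × V)) : V → V → Prop :=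
  Relation.ReflTransGen fun a b => (a, b) ∈ F ∨ (b, a) ∈ F

/-- A digraph is strongly connected if every vertex reaches every other vertex. -/
def StronglyConnected (F : Finset (V × V)) : Prop :=
  ∀ i j : V, dReach F i j

/-- A simple digraph has no self-loops. -/
def NoSelfLoops (F : Finset (V × V)) : Prop :=
  ∀ e ∈ F, e.1 ≠ e.2

/-- The edge set `F` contains a directed cycle. -/
def HasDirectedCycle (F : Finset (V × V)) : Prop :=
  ∃ v : V, Relation.TransGen (fun a b => (a, b) ∈ F) v v

/-- The Laplacian matrix `A_k` of the labeled digraph `(V, F, k)`: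
`(A_k)_{i,j} = k_{j→i}` if `(j→i) ∈ F`, `(A_k)_{i,i} = -∑_{(i→j)∈F} k_{i→j}`, and `0` otherwise. -/
noncomputable def digraphLaplacian [Fintype V] [DecidableEq V]
    (F : Finset (V × V)) (k : V × V → ℝ) : Matrix V V ℝ :=
  Matrix.of fun i j =>
    if i = j then -(∑ e ∈ F.filter (fun e => e.1 = i), k e)
    else if (j, i) ∈ F then k (j, i) else 0

/-- `T` is a directed spanning tree of the strongly connected digraph `E`, rooted at `i`
and directed towards the root: no directed cycle, and every vertex except `i`
is the source of exactly one edge. -/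
def IsSpanningTreeTo [DecidableEq V] (E : Finset (V × V)) (i : V)
    (T : Finset (V × V)) : Prop :=
  T ⊆ E ∧ ¬ HasDirectedCycle T ∧
    ∀ j : V, j ≠ i → (T.filter (fun e => e.1 = j)).card = 1

open scoped Classical in
/-- The tree constant `(K_k)_i = ∑_{T ∈ T_i} ∏_{(j→j')∈T} k_{j→j'}`. -/
noncomputable def treeConst [Fintype V] [DecidableEq V]
    (E : Finset (V × V)) (k : V × V → ℝ) (i : V) : ℝ :=
  ∑ T ∈ E.powerset.filter (fun T => IsSpanningTreeTo E i T), ∏ e ∈ T, k e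

/-- The incidence matrix of the digraph with edge set `F`: in the column of edge `(j→j')`,
entry `-1` in row `j`, entry `+1` in row `j'`, and `0` elsewhere. -/
noncomputable def incidence [DecidableEq V] (F : Finset (V × V)) :
    Matrix V {e : V × V // e ∈ F} ℝ :=
  Matrix.of fun i e =>
    (if (e : V × V).2 = i then (1 : ℝ) else 0) - (if (e : V × V).1 = i then (1 : ℝ) else 0)

open Function Relation

section Successor

variable [DecidableEq V] {S S' : Finset (V × V)} {e : V × V} {v w : V}

abbrev outEdges (S : Finset (V × V)) (v : V) : Finset (V × V) := S.filter (·.1 = v)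

/-- The head of an out-edge of `v` in `S`; it is `v` itself when `v` is a sink. -/
noncomputable def nextVertex (S : Finset (V × V)) (v : V) : V :=
  if h : (outEdges S v).Nonempty then h.choose.2 else v

lemma mk_nextVertex_mem (h : (outEdges S v).Nonempty) : (v, nextVertex S v) ∈ S := by
  rw [nextVertex, dif_pos h]
  obtain ⟨hmem, hfst⟩ := Finset.mem_filter.mp h.choose_spec
  convert hmem using 1
  exact Prod.ext hfst.symm rfl

lemma nextVertex_eq_of_mem (hS : (outEdges S v).card ≤ 1) (hw : (v, w) ∈ S) :
    nextVertex S v = w := by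
  have hne : (outEdges S v).Nonempty := ⟨(v, w), by simp [hw]⟩
  exact congrArg Prod.snd <| Finset.card_le_one.mp hS (v, nextVertex S v)
    (by simp [mk_nextVertex_mem hne]) (v, w) (by simp [hw])

lemma outEdges_eq_singleton (h : (outEdges S v).card = 1) :
    outEdges S v = {(v, nextVertex S v)} := by
  obtain ⟨a, ha⟩ := Finset.card_eq_one.mp h
  have hmem : (v, nextVertex S v) ∈ outEdges S v := by
    simp [mk_nextVertex_mem (Finset.card_pos.mp (h ▸ Nat.one_pos))]
  rw [ha, Finset.mem_singleton] at hmem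
  rw [ha, hmem]

lemma nextVertex_congr (h : outEdges S v = outEdges S' v) : nextVertex S v = nextVertex S' v := by
  simp only [nextVertex, h]

lemma outEdges_insert_of_ne (h : e.1 ≠ v) : outEdges (insert e S) v = outEdges S v := by
  simp [outEdges, Finset.filter_insert, h]

lemma outEdges_erase : outEdges (S.erase e) v = (outEdges S v).erase e :=
  Finset.filter_erase _ _ _

lemma outEdges_erase_of_ne (h : e.1 ≠ v) : outEdges (S.erase e) v = outEdges S v := by
  rw [outEdges_erase, Finset.erase_eq_of_notMem]
  simp [h]

lemma exists_iterate_eq_of_reflTransGen (hS : ∀ v, (outEdges S v).card ≤ 1)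
    (h : ReflTransGen (fun a b => (a, b) ∈ S) v w) : ∃ n, (nextVertex S)^[n] v = w := by
  induction h with
  | refl => exact ⟨0, rfl⟩
  | tail _ hbc ih =>
    obtain ⟨n, hn⟩ := ih
    exact ⟨n + 1, by rw [iterate_succ_apply', hn, nextVertex_eq_of_mem (hS _) hbc]⟩

lemma transGen_iterate {α : Type*} {R : α → α → Prop} {f : α → α} {x : α} {n : ℕ}
    (hn : 0 < n) (h : ∀ t < n, R (f^[t] x) (f^[t + 1] x)) : TransGen R x (f^[n] x) := by
  induction n with
  | zero => omega
  | succ n ih =>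
    rcases Nat.eq_zero_or_pos n with rfl | hn
    · exact .single (h 0 Nat.one_pos)
    · exact (ih hn fun t ht => h t (by omega)).tail (h n (by omega))

lemma exists_iterate_eq_of_eq_of_ne {α : Type*} {f g : α → α} {w : α}
    (hfg : ∀ v, v ≠ w → g v = f v) {n : ℕ} {v : α} (h : f^[n] v = w) :
    ∃ m, g^[m] v = w := by
  induction n generalizing v with
  | zero => exact ⟨0, h⟩
  | succ n ih =>
    by_cases hv : v = w
    · exact ⟨0, hv⟩
    · obtain ⟨m, hm⟩ := ih (v := f v) h
      exact ⟨m + 1, by rw [iterate_succ_apply, hfg v hv, hm]⟩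

lemma hasDirectedCycle_of_forall_iterate_nonempty [Finite V] (x : V)
    (h : ∀ t, (outEdges S ((nextVertex S)^[t] x)).Nonempty) : HasDirectedCycle S := by
  obtain ⟨a, b, hab, he⟩ := Finite.exists_ne_map_eq_of_infinite fun n => (nextVertex S)^[n] x
  wlog hlt : a < b generalizing a b
  · exact this b a hab.symm he.symm (by omega)
  refine ⟨(nextVertex S)^[a] x, ?_⟩
  have hcyc := transGen_iterate (R := fun a b => (a, b) ∈ S) (f := nextVertex S)
    (x := (nextVertex S)^[a] x) (n := b - a) (by omega) fun t _ => by
      rw [iterate_succ_apply', ← iterate_add_apply]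
      exact mk_nextVertex_mem (h _)
  rwa [← iterate_add_apply, Nat.sub_add_cancel hlt.le, ← he] at hcyc

lemma not_hasDirectedCycle_of_iterate_eq_sink {r : V} (hS : ∀ v, (outEdges S v).card ≤ 1)
    (hr : outEdges S r = ∅) (hreach : ∀ v, ∃ n, (nextVertex S)^[n] v = r) :
    ¬HasDirectedCycle S := by
  -- a cycle through `v` rotates to a cycle through `nextVertex S v`, and so it would reach the sink
  suffices ∀ n v, (nextVertex S)^[n] v = r → ¬TransGen (fun a b => (a, b) ∈ S) v v by
    rintro ⟨v, hv⟩
    obtain ⟨n, hn⟩ := hreach v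
    exact this n v hn hv
  intro n
  induction n with
  | zero =>
    intro v hv hcyc
    obtain ⟨c, hc, -⟩ := TransGen.head'_iff.mp hcyc
    have : (v, c) ∈ outEdges S r := by simp [← hv, hc]
    simp [hr] at this
  | succ n ih =>
    intro v hn hv
    obtain ⟨c, hc, hcv⟩ := TransGen.head'_iff.mp hv
    rw [iterate_succ_apply, nextVertex_eq_of_mem (hS v) hc] at hn
    exact ih c hn (TransGen.tail' hcv hc)

end Successor

section SpanningTree

variable [DecidableEq V] {E T : Finset (V × V)} {e : V × V} {i j v w : V}

namespace IsSpanningTreeTo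

lemma outEdges_nonempty (hT : IsSpanningTreeTo E i T) (hv : v ≠ i) : (outEdges T v).Nonempty :=
  Finset.card_pos.mp (by rw [hT.2.2 v hv]; exact Nat.one_pos)

variable [Finite V]

lemma outEdges_root (hT : IsSpanningTreeTo E i T) : outEdges T i = ∅ := by
  by_contra h
  refine hT.2.1 (hasDirectedCycle_of_forall_iterate_nonempty i fun t => ?_)
  by_cases hv : (nextVertex T)^[t] i = i
  · rw [hv]
    exact Finset.nonempty_iff_ne_empty.mpr h
  · exact hT.outEdges_nonempty hv

lemma exists_iterate_eq_root (hT : IsSpanningTreeTo E i T) (v : V) :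
    ∃ n, (nextVertex T)^[n] v = i := by
  by_contra! h
  exact hT.2.1 (hasDirectedCycle_of_forall_iterate_nonempty v fun t => hT.outEdges_nonempty (h t))

lemma notMem_of_fst_eq (hT : IsSpanningTreeTo E i T) (he : e.1 = i) : e ∉ T := fun heT => by
  have : e ∈ outEdges T i := by simp [heT, he]
  simp [hT.outEdges_root] at this

end IsSpanningTreeTo

lemma isSpanningTreeTo_of_forall_iterate (hTE : T ⊆ E)
    (hout : ∀ v, v ≠ i → (outEdges T v).card = 1) (hi : outEdges T i = ∅)
    (hreach : ∀ v, ∃ n, (nextVertex T)^[n] v = i) : IsSpanningTreeTo E i T := by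
  refine ⟨hTE, not_hasDirectedCycle_of_iterate_eq_sink (fun v => ?_) hi hreach, hout⟩
  rcases eq_or_ne v i with rfl | hv
  · simp [hi]
  · exact (hout v hv).le

def IsTreeOn (E : Finset (V × V)) (i : V) (A : Finset V) (T : Finset (V × V)) : Prop :=
  T ⊆ E ∧ (∀ v, (outEdges T v).card = if v ∈ A.erase i then 1 else 0) ∧
    ∀ v ∈ A, dReach T v i

lemma IsTreeOn.insert_edge {A : Finset V} (hT : IsTreeOn E i A T) (hiA : i ∈ A) (he : e ∈ E)
    (h₁ : e.1 ∉ A) (h₂ : e.2 ∈ A) : IsTreeOn E i (insert e.1 A) (insert e T) := by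
  obtain ⟨hTE, hout, hreach⟩ := hT
  have hei : e.1 ≠ i := fun h => h₁ (h ▸ hiA)
  refine ⟨Finset.insert_subset he hTE, fun v => ?_, fun v hv => ?_⟩
  · rcases eq_or_ne e.1 v with rfl | hv
    · have : outEdges T e.1 = ∅ := by simpa [h₁] using hout e.1
      simp [outEdges, Finset.filter_insert, this, hei]
    · rw [outEdges_insert_of_ne hv, hout v]
      simp [hv.symm]
  · have hmono := ReflTransGen.mono (p := fun a b => (a, b) ∈ insert e T)
      fun a b h => Finset.mem_insert_of_mem h
    rcases Finset.mem_insert.mp hv with rfl | hv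
    · exact .head (Finset.mem_insert_self _ _) (hmono _ _ (hreach _ h₂))
    · exact hmono _ _ (hreach v hv)

lemma IsTreeOn.isSpanningTreeTo [Fintype V] (hT : IsTreeOn E i Finset.univ T) :
    IsSpanningTreeTo E i T := by
  obtain ⟨hTE, hout, hreach⟩ := hT
  refine isSpanningTreeTo_of_forall_iterate hTE (fun v hv => by simpa [hv] using hout v)
    (by simpa using hout i) fun v =>
      exists_iterate_eq_of_reflTransGen (fun u => ?_) (hreach v (Finset.mem_univ v))
  rw [hout u]
  split_ifs <;> omega

lemma exists_edge_enter_of_dReach {A : Finset V} (hi : i ∈ A) (h : dReach E w i) (hw : w ∉ A) :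
    ∃ e ∈ E, e.1 ∉ A ∧ e.2 ∈ A := by
  induction h using ReflTransGen.head_induction_on with
  | refl => exact absurd hi hw
  | @head a c hac _ ih =>
    by_cases hc : c ∈ A
    · exact ⟨(a, c), hac, hw, hc⟩
    · exact ih hc

lemma exists_isSpanningTreeTo [Fintype V] (hsc : StronglyConnected E) (i : V) :
    ∃ T, IsSpanningTreeTo E i T := by
  classical
  -- a spanning tree of a set `A` of maximal size containing `i` must span everything
  obtain ⟨A, hA, hmax⟩ := Finset.exists_max_image
    (Finset.univ.filter fun A => i ∈ A ∧ ∃ T, IsTreeOn E i A T) Finset.card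
    ⟨{i}, Finset.mem_filter.mpr ⟨Finset.mem_univ _, Finset.mem_singleton_self i, ∅,
      Finset.empty_subset E, fun v => by simp,
      fun v hv => Finset.mem_singleton.mp hv ▸ .refl⟩⟩
  obtain ⟨hiA, T, hT⟩ := (Finset.mem_filter.mp hA).2
  obtain rfl : A = Finset.univ := by
    by_contra hne
    obtain ⟨w, hw⟩ : ∃ w, w ∉ A := by simpa [Finset.eq_univ_iff_forall] using hne
    obtain ⟨e, he, h₁, h₂⟩ := exists_edge_enter_of_dReach hiA (hsc w i) hw
    have := hmax (insert e.1 A) (Finset.mem_filter.mpr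
      ⟨Finset.mem_univ _, Finset.mem_insert_of_mem hiA, _, hT.insert_edge hiA he h₁ h₂⟩)
    rw [Finset.card_insert_of_notMem h₁] at this
    omega
  exact ⟨T, hT.isSpanningTreeTo⟩

open scoped Classical in
noncomputable def spanningTrees (E : Finset (V × V)) (i : V) : Finset (Finset (V × V)) :=
  E.powerset.filter (IsSpanningTreeTo E i)

lemma mem_spanningTrees : T ∈ spanningTrees E i ↔ IsSpanningTreeTo E i T := by
  classical
  rw [spanningTrees, Finset.filter_congr_decidable, Finset.mem_filter, Finset.mem_powerset]
  exact ⟨And.right, fun h => ⟨h.1, h⟩⟩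

end SpanningTree

section Unicycle

variable [DecidableEq V] {E T H : Finset (V × V)} {e : V × V} {i j r : V}

/-- `H` is a functional graph whose unique cycle passes through `i`. -/
def IsUnicycleThrough (H : Finset (V × V)) (i : V) : Prop :=
  (∀ v, (outEdges H v).card = 1) ∧ ∀ v, ∃ n, (nextVertex H)^[n] v = i

noncomputable def cyclePred (H : Finset (V × V)) (i : V) : V :=
  (nextVertex H)^[minimalPeriod (nextVertex H) i - 1] i

namespace IsUnicycleThrough

lemma mk_nextVertex_mem (hH : IsUnicycleThrough H i) (v : V) : (v, nextVertex H v) ∈ H :=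
  _root_.mk_nextVertex_mem (Finset.card_pos.mp (by rw [hH.1 v]; exact Nat.one_pos))

lemma iterate (hH : IsUnicycleThrough H i) (n : ℕ) :
    IsUnicycleThrough H ((nextVertex H)^[n] i) :=
  ⟨hH.1, fun v => let ⟨m, hm⟩ := hH.2 v; ⟨n + m, by rw [iterate_add_apply, hm]⟩⟩

lemma isSpanningTreeTo_erase (hH : IsUnicycleThrough H r) (hHE : H ⊆ E) :
    IsSpanningTreeTo E r (H.erase (r, nextVertex H r)) := by
  have hagree : ∀ v, v ≠ r → nextVertex (H.erase (r, nextVertex H r)) v = nextVertex H v :=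
    fun v hv => nextVertex_congr (outEdges_erase_of_ne hv.symm)
  refine isSpanningTreeTo_of_forall_iterate ((Finset.erase_subset _ _).trans hHE)
    (fun v hv => by rw [outEdges_erase_of_ne (Ne.symm hv), hH.1 v]) ?_
    fun v => let ⟨n, hn⟩ := hH.2 v; exists_iterate_eq_of_eq_of_ne hagree hn
  rw [outEdges_erase, outEdges_eq_singleton (hH.1 r), Finset.erase_singleton]

lemma minimalPeriod_pos (hH : IsUnicycleThrough H i) : 0 < minimalPeriod (nextVertex H) i := by
  obtain ⟨n, hn⟩ := hH.2 (nextVertex H i)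
  exact IsPeriodicPt.minimalPeriod_pos n.succ_pos
    (by rw [IsPeriodicPt, IsFixedPt, iterate_succ_apply, hn])


lemma isUnicycleThrough_cyclePred (hH : IsUnicycleThrough H i) :
    IsUnicycleThrough H (cyclePred H i) :=
  hH.iterate _

lemma nextVertex_cyclePred (hH : IsUnicycleThrough H i) : nextVertex H (cyclePred H i) = i := by
  rw [cyclePred, ← iterate_succ_apply' (nextVertex H), Nat.succ_eq_add_one,
    Nat.sub_one_add_one hH.minimalPeriod_pos.ne', iterate_minimalPeriod]

lemma eq_cyclePred (hH : IsUnicycleThrough H i) (hj : (j, i) ∈ H)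
    (hac : ¬HasDirectedCycle (H.erase (j, i))) : j = cyclePred H i := by
  set f := nextVertex H
  -- `(j, i)` is an edge of the cycle `i → f i → ⋯ → f^[m] i = i`, `m` the minimal period,
  -- or that cycle would survive its removal
  obtain ⟨t, ht, hte⟩ : ∃ t < minimalPeriod f i, (f^[t] i, f^[t + 1] i) = (j, i) := by
    by_contra! hnot
    refine hac ⟨i, ?_⟩
    have hcyc := transGen_iterate (R := fun a b => (a, b) ∈ H.erase (j, i)) hH.minimalPeriod_pos
      fun t ht => Finset.mem_erase.mpr
        ⟨hnot t ht, by rw [iterate_succ_apply']; exact hH.mk_nextVertex_mem _⟩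
    rwa [iterate_minimalPeriod] at hcyc
  obtain ⟨rfl, hti⟩ := Prod.ext_iff.mp hte
  have := IsPeriodicPt.minimalPeriod_le t.succ_pos hti
  rw [cyclePred, show minimalPeriod f i - 1 = t by omega]

end IsUnicycleThrough

namespace IsSpanningTreeTo

variable [Finite V]

lemma isUnicycleThrough_insert (hT : IsSpanningTreeTo E j T) (he : e.1 = j) :
    IsUnicycleThrough (insert e T) j := by
  refine ⟨fun v => ?_, fun v => ?_⟩
  · rcases eq_or_ne e.1 v with rfl | hv
    · simp [outEdges, Finset.filter_insert, hT.outEdges_root, he]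
    · rw [outEdges_insert_of_ne hv]
      exact hT.2.2 v (he ▸ hv.symm)
  · obtain ⟨n, hn⟩ := hT.exists_iterate_eq_root v
    exact exists_iterate_eq_of_eq_of_ne
      (fun v hv => nextVertex_congr (outEdges_insert_of_ne (he ▸ hv.symm))) hn

lemma nextVertex_insert (hT : IsSpanningTreeTo E j T) (he : e.1 = j) :
    nextVertex (insert e T) j = e.2 :=
  nextVertex_eq_of_mem ((hT.isUnicycleThrough_insert he).1 j).le (he ▸ Finset.mem_insert_self e T)

lemma isUnicycleThrough_insert_snd (hT : IsSpanningTreeTo E j T) (he : e.1 = j) :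
    IsUnicycleThrough (insert e T) e.2 :=
  hT.nextVertex_insert he ▸ (hT.isUnicycleThrough_insert he).iterate 1

end IsSpanningTreeTo

open scoped Classical in
noncomputable def unicyclesThrough (E : Finset (V × V)) (i : V) : Finset (Finset (V × V)) :=
  E.powerset.filter (IsUnicycleThrough · i)

lemma mem_unicyclesThrough : H ∈ unicyclesThrough E i ↔ H ⊆ E ∧ IsUnicycleThrough H i := by
  classical
  rw [unicyclesThrough, Finset.filter_congr_decidable, Finset.mem_filter, Finset.mem_powerset]

end Unicycle

section TreeSum

variable [Fintype V] [DecidableEq V] {E : Finset (V × V)}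

lemma treeConst_eq_sum (k : V × V → ℝ) (i : V) :
    treeConst E k i = ∑ T ∈ spanningTrees E i, ∏ e ∈ T, k e := rfl

lemma treeConst_pos (hsc : StronglyConnected E) {k : V × V → ℝ} (hk : ∀ e ∈ E, 0 < k e)
    (i : V) : 0 < treeConst E k i := by
  obtain ⟨T, hT⟩ := exists_isSpanningTreeTo hsc i
  exact Finset.sum_pos
    (fun T hT => Finset.prod_pos fun e he => hk e ((mem_spanningTrees.mp hT).1 he))
    ⟨T, mem_spanningTrees.mpr hT⟩

lemma sum_outEdges_mul_treeConst_eq_sum_unicycles (k : V × V → ℝ) (i : V) :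
    (∑ e ∈ E.filter (·.1 = i), k e) * treeConst E k i
      = ∑ H ∈ unicyclesThrough E i, ∏ e ∈ H, k e := by
  rw [treeConst_eq_sum, Finset.sum_mul_sum, Finset.sum_sigma']
  refine Finset.sum_nbij' (fun p => insert p.1 p.2)
    (fun H => ⟨(i, nextVertex H i), H.erase (i, nextVertex H i)⟩) ?_ ?_ ?_ ?_ ?_
  · rintro ⟨e, T⟩ hp
    obtain ⟨⟨he, rfl⟩, hT⟩ := by simpa [mem_spanningTrees] using hp
    exact mem_unicyclesThrough.mpr
      ⟨Finset.insert_subset he hT.1, hT.isUnicycleThrough_insert rfl⟩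
  · intro H hH
    obtain ⟨hHE, hH⟩ := mem_unicyclesThrough.mp hH
    simpa [mem_spanningTrees] using
      ⟨hHE (hH.mk_nextVertex_mem i), hH.isSpanningTreeTo_erase hHE⟩
  · rintro ⟨e, T⟩ hp
    obtain ⟨⟨-, rfl⟩, hT⟩ := by simpa [mem_spanningTrees] using hp
    simp [hT.nextVertex_insert rfl, Finset.erase_insert (hT.notMem_of_fst_eq rfl)]
  · intro H hH
    exact Finset.insert_erase ((mem_unicyclesThrough.mp hH).2.mk_nextVertex_mem i)
  · rintro ⟨e, T⟩ hp
    obtain ⟨⟨-, rfl⟩, hT⟩ := by simpa [mem_spanningTrees] using hp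
    exact (Finset.prod_insert (hT.notMem_of_fst_eq rfl)).symm

lemma sum_inEdges_mul_treeConst_eq_sum_unicycles (k : V × V → ℝ) (i : V) :
    ∑ e ∈ E.filter (·.2 = i), k e * treeConst E k e.1
      = ∑ H ∈ unicyclesThrough E i, ∏ e ∈ H, k e := by
  simp_rw [treeConst_eq_sum, Finset.mul_sum]
  rw [Finset.sum_sigma']
  refine Finset.sum_nbij' (fun p => insert p.1 p.2)
    (fun H => ⟨(cyclePred H i, i), H.erase (cyclePred H i, i)⟩) ?_ ?_ ?_ ?_ ?_
  · rintro ⟨e, T⟩ hp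
    obtain ⟨⟨he, rfl⟩, hT⟩ := by simpa [mem_spanningTrees] using hp
    exact mem_unicyclesThrough.mpr
      ⟨Finset.insert_subset he hT.1, hT.isUnicycleThrough_insert_snd rfl⟩
  · intro H hH
    obtain ⟨hHE, hH⟩ := mem_unicyclesThrough.mp hH
    have hpred := hH.mk_nextVertex_mem (cyclePred H i)
    have hT := hH.isUnicycleThrough_cyclePred.isSpanningTreeTo_erase hHE
    rw [hH.nextVertex_cyclePred] at hpred hT
    simpa [mem_spanningTrees] using ⟨hHE hpred, hT⟩
  · rintro ⟨e, T⟩ hp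
    obtain ⟨⟨-, rfl⟩, hT⟩ := by simpa [mem_spanningTrees] using hp
    have heT := hT.notMem_of_fst_eq rfl
    have hpred := (hT.isUnicycleThrough_insert_snd rfl).eq_cyclePred (Finset.mem_insert_self e T)
      (by rw [Finset.erase_insert heT]; exact hT.2.1)
    dsimp only
    rw [← hpred, Finset.erase_insert heT]
  · intro H hH
    obtain ⟨-, hH⟩ := mem_unicyclesThrough.mp hH
    have hpred := hH.mk_nextVertex_mem (cyclePred H i)
    rw [hH.nextVertex_cyclePred] at hpred
    exact Finset.insert_erase hpred
  · rintro ⟨e, T⟩ hp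
    obtain ⟨-, hT⟩ := by simpa [mem_spanningTrees] using hp
    exact (Finset.prod_insert (hT.notMem_of_fst_eq rfl)).symm

theorem sum_inEdges_mul_treeConst (k : V × V → ℝ) (i : V) :
    ∑ e ∈ E.filter (·.2 = i), k e * treeConst E k e.1
      = (∑ e ∈ E.filter (·.1 = i), k e) * treeConst E k i := by
  rw [sum_inEdges_mul_treeConst_eq_sum_unicycles, sum_outEdges_mul_treeConst_eq_sum_unicycles]

end TreeSum

section Laplacian

variable [Fintype V] [DecidableEq V] {M : Type*} [AddCommMonoid M]

lemma sum_filter_snd_eq (F : Finset (V × V)) (i : V) (g : V × V → M) :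
    ∑ e ∈ F.filter (·.2 = i), g e = ∑ j, if (j, i) ∈ F then g (j, i) else 0 := by
  rw [← Finset.sum_filter]
  refine Finset.sum_nbij' Prod.fst (·, i) ?_ ?_ ?_ ?_ ?_ <;> aesop

lemma sum_filter_fst_eq (F : Finset (V × V)) (i : V) (g : V × V → M) :
    ∑ e ∈ F.filter (·.1 = i), g e = ∑ j, if (i, j) ∈ F then g (i, j) else 0 := by
  rw [← Finset.sum_filter]
  refine Finset.sum_nbij' Prod.snd (i, ·) ?_ ?_ ?_ ?_ ?_ <;> aesop

variable {F : Finset (V × V)} (k : V × V → ℝ)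

lemma digraphLaplacian_apply_self (i : V) :
    digraphLaplacian F k i i = -∑ e ∈ F.filter (·.1 = i), k e := by
  simp [digraphLaplacian]

lemma digraphLaplacian_apply_of_ne {i j : V} (h : i ≠ j) :
    digraphLaplacian F k i j = if (j, i) ∈ F then k (j, i) else 0 := by
  simp [digraphLaplacian, h]

lemma digraphLaplacian_apply (hloop : NoSelfLoops F) (i j : V) :
    digraphLaplacian F k i j
      = (if i = j then -∑ e ∈ F.filter (·.1 = i), k e else 0)
        + if (j, i) ∈ F then k (j, i) else 0 := by
  rcases eq_or_ne i j with rfl | h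
  · have : (i, i) ∉ F := fun h => hloop (i, i) h rfl
    simp [digraphLaplacian_apply_self, this]
  · simp [digraphLaplacian_apply_of_ne k h, h]

lemma digraphLaplacian_mulVec (hloop : NoSelfLoops F) (x : V → ℝ) (i : V) :
    (digraphLaplacian F k *ᵥ x) i
      = ∑ e ∈ F.filter (·.2 = i), k e * x e.1
        - (∑ e ∈ F.filter (·.1 = i), k e) * x i := by
  simp [mulVec, dotProduct, digraphLaplacian_apply k hloop, add_mul, Finset.sum_add_distrib,
    sum_filter_snd_eq, ite_mul]
  ring

lemma sum_digraphLaplacian_apply (hloop : NoSelfLoops F) (j : V) :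
    ∑ i, digraphLaplacian F k i j = 0 := by
  simp [digraphLaplacian_apply k hloop, Finset.sum_add_distrib, sum_filter_fst_eq]

end Laplacian

theorem digraphLaplacian_mulVec_treeConst [Fintype V] [DecidableEq V] {E : Finset (V × V)}
    (hloop : NoSelfLoops E) (k : V × V → ℝ) :
    digraphLaplacian E k *ᵥ treeConst E k = 0 := by
  ext i
  rw [digraphLaplacian_mulVec k hloop, sum_inEdges_mul_treeConst, sub_self, Pi.zero_apply]

lemma sum_outEdges_pos [Fintype V] [DecidableEq V] {E : Finset (V × V)} {k : V × V → ℝ}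
    (hk : ∀ e ∈ E, 0 < k e) (hsc : StronglyConnected E) (hcard : 1 < Fintype.card V) (i : V) :
    0 < ∑ e ∈ E.filter (·.1 = i), k e := by
  obtain ⟨j, hj⟩ := Fintype.exists_ne_of_one_lt_card hcard i
  obtain ⟨c, hc, -⟩ := (ReflTransGen.cases_head (hsc i j)).resolve_left (Ne.symm hj)
  exact Finset.sum_pos (fun e he => hk e (Finset.mem_filter.mp he).1)
    ⟨(i, c), Finset.mem_filter.mpr ⟨hc, rfl⟩⟩

lemma sum_erase_abs_eq_abs_of_sum_eq_zero {ι : Type*} [Fintype ι] [DecidableEq ι]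
    {f : ι → ℝ} (i : ι) (hf : ∀ j, j ≠ i → f j ≤ 0) (hsum : ∑ j, f j = 0) :
    ∑ j ∈ Finset.univ.erase i, |f j| = |f i| := by
  rw [← Finset.add_sum_erase _ _ (Finset.mem_univ i)] at hsum
  have hoff : ∀ j ∈ Finset.univ.erase i, f j ≤ 0 :=
    fun j hj => hf j (Finset.ne_of_mem_erase hj)
  rw [Finset.sum_congr rfl fun j hj => abs_of_nonpos (hoff j hj), Finset.sum_neg_distrib,
    abs_of_nonneg (by linarith [Finset.sum_nonpos hoff])]
  linarith

/-- For a strongly connected labeled simple digraph with at least two vertices, the matrix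
`M = -A_k diag(K_k)` has positive diagonal entries, nonpositive off-diagonal entries,
zero row and column sums; in particular it is row and column diagonally dominant. -/
theorem neg_laplacian_mul_diag_treeConst
    {V : Type*} [Fintype V] [DecidableEq V]
    (E : Finset (V × V)) (hloop : NoSelfLoops E)
    (k : V × V → ℝ) (hk : ∀ e ∈ E, 0 < k e)
    (hsc : StronglyConnected E) (hcard : 1 < Fintype.card V)
    (M : Matrix V V ℝ)
    (hM : M = -(digraphLaplacian E k * Matrix.diagonal (treeConst E k))) :
    (∀ i : V, 0 < M i i) ∧
    (∀ i j : V, i ≠ j → M i j ≤ 0) ∧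
    (∀ i : V, ∑ j : V, M i j = 0) ∧
    (∀ j : V, ∑ i : V, M i j = 0) ∧
    (∀ i : V, ∑ j ∈ Finset.univ.erase i, |M i j| ≤ |M i i|) ∧
    (∀ j : V, ∑ i ∈ Finset.univ.erase j, |M i j| ≤ |M j j|) := by
  have hK := treeConst_pos hsc hk
  have hMij : ∀ i j, M i j = -(digraphLaplacian E k i j * treeConst E k j) := by
    simp [hM, mul_diagonal]
  have hdiag : ∀ i, 0 < M i i := fun i => by
    rw [hMij, digraphLaplacian_apply_self, neg_mul, neg_neg]
    exact mul_pos (sum_outEdges_pos hk hsc hcard i) (hK i)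
  have hoff : ∀ i j, i ≠ j → M i j ≤ 0 := fun i j hij => by
    rw [hMij, digraphLaplacian_apply_of_ne k hij, neg_nonpos]
    split_ifs with h
    exacts [(mul_pos (hk _ h) (hK j)).le, by simp]
  have hrow : ∀ i, ∑ j, M i j = 0 := fun i => by
    simpa [hMij, mulVec, dotProduct] using congrFun (digraphLaplacian_mulVec_treeConst hloop k) i
  have hcol : ∀ j, ∑ i, M i j = 0 := fun j => by
    simp [hMij, ← Finset.sum_mul, sum_digraphLaplacian_apply k hloop]
  exact ⟨hdiag, hoff, hrow, hcol,
    fun i => (sum_erase_abs_eq_abs_of_sum_eq_zero i (fun j hj => hoff i j hj.symm) (hrow i)).le,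
    fun j => (sum_erase_abs_eq_abs_of_sum_eq_zero (f := (M · j)) j (fun i hi => hoff i j hi)
      (hcol j)).le⟩
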